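/- Let (b_n)_{n≥0} be the integer sequence defined by b_0 = 1, b_1 = −1 and the recursion b_n = −6·b_{n−1} − 25·b_{n−2} for n ≥ 2. Then ∑_{n=0}^∞ b_n/((2n+1)·5^{2n}) = 5π/16. -/

import Mathlib

/-!
Writing `w = 2 - i`, one has `-w² = -3 + 4i`, a root of `x² + 6x + 25`, so
`b n = Re((-1)ⁿ w^(2n+1)) / 2`. Hence the series is `5/2 · Re` of the arctangent series at
`z = w / 5`, a point of the unit disc. Since `(1 + iz) / (1 - iz) = 1 + i`, one gets
`arctan z = -(i/2) log(1 + i)`, whose real part is `arg(1 + i) / 2 = π / 8`.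
-/

open Complex

theorem eq_of_twoStep_recurrence {α : Type*} {u v : ℕ → α} (F : α → α → α)
    (hu : ∀ n, u (n + 2) = F (u n) (u (n + 1))) (hv : ∀ n, v (n + 2) = F (v n) (v (n + 1)))
    (h0 : u 0 = v 0) (h1 : u 1 = v 1) : u = v := by
  funext n
  induction n using Nat.twoStepInduction with
  | zero => exact h0
  | one => exact h1
  | more n ih0 ih1 => rw [hu, hv, ih0, ih1]

theorem neg_one_pow_mul_two_sub_I_pow_add_two (n : ℕ) :
    (-1 : ℂ) ^ (n + 2) * (2 - I) ^ (2 * (n + 2) + 1) =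
      -6 * ((-1) ^ (n + 1) * (2 - I) ^ (2 * (n + 1) + 1)) -
        25 * ((-1) ^ n * (2 - I) ^ (2 * n + 1)) := by
  -- `(2 - i)⁴ - 6 (2 - i)² + 25 = (i² + 1)(i² - 8i + 17)` as polynomials in `i`
  linear_combination (-1 : ℂ) ^ n * (2 - I) ^ (2 * n + 1) * (I ^ 2 - 8 * I + 17) * I_sq

theorem cast_eq_re_neg_one_pow_mul_two_sub_I_pow {b : ℕ → ℤ} (hb0 : b 0 = 1) (hb1 : b 1 = -1)
    (hrec : ∀ n : ℕ, 2 ≤ n → b n = -6 * b (n - 1) - 25 * b (n - 2)) (n : ℕ) :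
    (b n : ℝ) = ((-1 : ℂ) ^ n * (2 - I) ^ (2 * n + 1)).re / 2 := by
  refine congrFun (eq_of_twoStep_recurrence (u := fun n => (b n : ℝ))
    (v := fun n => ((-1 : ℂ) ^ n * (2 - I) ^ (2 * n + 1)).re / 2) (fun x y => -6 * y - 25 * x)
    (fun n => ?_) (fun n => ?_) ?_ ?_) n
  · exact_mod_cast hrec (n + 2) (by omega)
  · rw [neg_one_pow_mul_two_sub_I_pow_add_two]
    simp only [neg_mul, sub_re, neg_re, mul_re, re_ofNat, im_ofNat, zero_mul, sub_zero]
    ring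
  · simp [hb0]
  · norm_num [hb1, pow_succ, mul_re]

theorem re_neg_one_pow_mul_pow_div (w : ℂ) {r : ℝ} (hr : r ≠ 0) (n : ℕ) :
    ((-1) ^ n * w ^ (2 * n + 1)).re / ((2 * n + 1) * r ^ (2 * n)) =
      r * ((-1) ^ n * (w / r) ^ (2 * n + 1) / ↑(2 * n + 1)).re := by
  have hdiv : (-1) ^ n * (w / r) ^ (2 * n + 1) / ↑(2 * n + 1) =
      (-1) ^ n * w ^ (2 * n + 1) * ((r ^ (2 * n + 1) * (2 * n + 1))⁻¹ : ℝ) := by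
    push_cast
    rw [div_pow, mul_inv]
    ring
  rw [hdiv, re_mul_ofReal]
  field_simp
  ring

theorem norm_two_sub_I_div_five_lt_one : ‖(2 - I) / 5‖ < 1 := by
  rw [norm_div, div_lt_one (by simp)]
  calc ‖2 - I‖ ≤ ‖(2 : ℂ)‖ + ‖I‖ := norm_sub_le _ _
    _ < ‖(5 : ℂ)‖ := by norm_num

theorem arg_one_add_I : arg (1 + I) = Real.pi / 4 := by
  have htan : Real.tan (arg (1 + I)) = 1 := by simp [tan_arg]
  have hmem : arg (1 + I) ∈ Set.Ioo (-(Real.pi / 2)) (Real.pi / 2) :=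
    abs_lt.mp (abs_arg_lt_pi_div_two_iff.mpr (Or.inl (by simp)))
  rw [← Real.arctan_one, Real.arctan_eq_of_tan_eq htan hmem]

theorem re_arctan_two_sub_I_div_five : (arctan ((2 - I) / 5)).re = Real.pi / 8 := by
  have hratio : (1 + (2 - I) / 5 * I) / (1 - (2 - I) / 5 * I) = 1 + I := by
    have hne : (1 - (2 - I) / 5 * I : ℂ) ≠ 0 := by
      intro h
      simp [Complex.ext_iff] at h
    rw [div_eq_iff hne]
    linear_combination (-I / 5) * I_sq
  rw [arctan, hratio]
  simp only [mul_re, div_ofNat_re, neg_re, I_re, neg_zero, zero_div, zero_mul, div_ofNat_im,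
    neg_im, I_im, log_im, arg_one_add_I]
  ring

theorem sum_b_eq_five_pi_div_sixteen (b : ℕ → ℤ) (hb0 : b 0 = 1) (hb1 : b 1 = -1)
    (hrec : ∀ n : ℕ, 2 ≤ n → b n = -6 * b (n - 1) - 25 * b (n - 2)) :
    (∑' n : ℕ, (b n : ℝ) / ((2 * n + 1) * 5 ^ (2 * n))) = 5 * Real.pi / 16 := by
  have hterm (n : ℕ) : (b n : ℝ) / ((2 * n + 1) * 5 ^ (2 * n)) =
      5 / 2 * ((-1) ^ n * ((2 - I) / 5) ^ (2 * n + 1) / ↑(2 * n + 1)).re := by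
    rw [cast_eq_re_neg_one_pow_mul_two_sub_I_pow hb0 hb1 hrec n, div_right_comm,
      re_neg_one_pow_mul_pow_div _ (by norm_num : (5 : ℝ) ≠ 0)]
    push_cast
    ring
  have hsum := (hasSum_re (hasSum_arctan norm_two_sub_I_div_five_lt_one)).mul_left (5 / 2)
  rw [re_arctan_two_sub_I_div_five] at hsum
  rw [(hsum.congr_fun hterm).tsum_eq]
  ring
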